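/- For every integer i ≥ 1, every real x > τ(i−1), and every a ≥ 0, log^{(i)}(x + a) / log^{(i)} x ≤ 1 + a / ∏_{j=0}^{i} log^{(j)} x. -/
import Mathlib


/-- The `i`-fold iterated natural logarithm. -/
noncomputable def iterLog : ℕ → ℝ → ℝ
  | 0, x => x
  | i + 1, x => Real.log (iterLog i x)

/-- The tower function: `tower 0 = 1`, `tower (i+1) = e^(tower i)`. -/
noncomputable def tower : ℕ → ℝ
  | 0 => 1
  | i + 1 => Real.exp (tower i)

lemma tower_pos (k : ℕ) : 0 < tower k := by
  cases k with
  | zero => norm_num [tower]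
  | succ k => exact Real.exp_pos _

lemma one_le_tower (k : ℕ) : 1 ≤ tower k := by
  induction k with
  | zero => norm_num [tower]
  | succ k ih =>
    have : (0:ℝ) ≤ tower k := by linarith
    calc (1:ℝ) ≤ Real.exp (tower k) := Real.one_le_exp this
      _ = tower (k + 1) := rfl

lemma iterLog_gt (k j : ℕ) (hj : j ≤ k) (x : ℝ) (hx : tower k < x) :
    tower (k - j) < iterLog j x := by
  induction j with
  | zero => simpa [iterLog] using hx
  | succ j ih =>
    have h1 : tower (k - j) < iterLog j x := ih (by omega)
    have hk : k - j = (k - (j + 1)) + 1 := by omega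
    rw [hk] at h1
    have := Real.log_lt_log (Real.exp_pos (tower (k - (j+1)))) (by simpa [tower] using h1)
    simpa [iterLog, Real.log_exp] using this

lemma iterLog_pos (k j : ℕ) (hj : j ≤ k + 1) (x : ℝ) (hx : tower k < x) :
    0 < iterLog j x := by
  rcases Nat.lt_or_ge j (k + 1) with h | h
  · have := iterLog_gt k j (by omega) x hx
    have h1 := one_le_tower (k - j)
    linarith
  · have hjk : j = k + 1 := le_antisymm hj h
    subst hjk
    have := iterLog_gt k k le_rfl x hx
    simp only [Nat.sub_self, tower] at this
    simpa [iterLog] using Real.log_pos this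

lemma iterLog_succ_eq (i : ℕ) (x : ℝ) : iterLog (i + 1) x = iterLog i (Real.log x) := by
  induction i with
  | zero => rfl
  | succ i ih => show Real.log _ = Real.log _; rw [ih]

lemma log_add_le {x a : ℝ} (hx : 0 < x) (ha : 0 ≤ a) :
    Real.log (x + a) ≤ Real.log x + a / x := by
  have h1 : 0 < (x + a) / x := by positivity
  have h2 := Real.log_le_sub_one_of_pos h1
  rw [Real.log_div (by linarith) (ne_of_gt hx)] at h2
  have h3 : (x + a) / x = 1 + a / x := by field_simp
  linarith [h2, h3.le, h3.ge]

/-- For `i ≥ 1`, `x > τ(i−1)` and `a ≥ 0`,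
`log^{(i)}(x+a) / log^{(i)} x ≤ 1 + a / ∏_{j=0}^{i} log^{(j)} x`. -/
theorem iterLog_ratio_le (i : ℕ) (hi : 1 ≤ i) (x a : ℝ) (hx : tower (i - 1) < x)
    (ha : 0 ≤ a) :
    iterLog i (x + a) / iterLog i x ≤ 1 + a / ∏ j ∈ Finset.range (i + 1), iterLog j x := by
  induction i, hi using Nat.le_induction generalizing x a with
  | base =>
    simp only [Nat.sub_self, tower] at hx
    have hx0 : 0 < x := by linarith
    have hlx : 0 < Real.log x := Real.log_pos hx
    have hb := log_add_le hx0 ha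
    have hprod : ∏ j ∈ Finset.range 2, iterLog j x = x * Real.log x := by
      simp [Finset.prod_range_succ, iterLog]
    rw [hprod]
    calc iterLog 1 (x + a) / iterLog 1 x ≤ (Real.log x + a / x) / Real.log x := by
          simp only [iterLog]
          gcongr
      _ = 1 + a / (x * Real.log x) := by field_simp
  | succ i hi1 IH =>
    simp only [Nat.add_sub_cancel] at hx
    have hx0 : 0 < x := lt_trans (tower_pos i) hx
    set y := Real.log x with hy_def
    have hy : tower (i - 1) < y := by
      have hi' : i = (i - 1) + 1 := (Nat.succ_pred_eq_of_pos hi1).symm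
      rw [hi'] at hx
      have := Real.log_lt_log (Real.exp_pos _) (by simpa [tower] using hx)
      simpa [Real.log_exp] using this
    set b := Real.log (x + a) - Real.log x with hb_def
    have hb0 : 0 ≤ b := sub_nonneg.mpr (Real.log_le_log hx0 (by linarith))
    have hba : b ≤ a / x := by
      have := log_add_le hx0 ha
      simp only [hb_def]
      linarith
    have hIH := IH y b hy hb0
    have heq1 : iterLog (i + 1) (x + a) = iterLog i (y + b) := by
      rw [iterLog_succ_eq]
      congr 1
      simp [hb_def, hy_def]
    have heq2 : iterLog (i + 1) x = iterLog i y := iterLog_succ_eq i x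
    have hP : 0 < ∏ j ∈ Finset.range (i + 1), iterLog j y := by
      apply Finset.prod_pos
      intro j hj
      exact iterLog_pos (i - 1) j (by simp at hj; omega) y hy
    have hprod : ∏ j ∈ Finset.range (i + 1 + 1), iterLog j x =
        (∏ j ∈ Finset.range (i + 1), iterLog j y) * x := by
      rw [Finset.prod_range_succ']
      exact congrArg (· * x) (Finset.prod_congr rfl fun j _ => iterLog_succ_eq j x)
    rw [heq1, heq2, hprod]
    refine hIH.trans ?_
    have : b / (∏ j ∈ Finset.range (i + 1), iterLog j y) ≤
        a / ((∏ j ∈ Finset.range (i + 1), iterLog j y) * x) := by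
      rw [show (∏ j ∈ Finset.range (i + 1), iterLog j y) * x
          = x * ∏ j ∈ Finset.range (i + 1), iterLog j y from mul_comm _ _,
        ← div_div]
      gcongr
    linarith
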